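/- The function a ↦ w₊(a) = [(4 − 10a + a²) + 2(a−2)√(1 − 4a + a²)]/(−8 − 4a + a²) is monotonically decreasing on (0, α], where α = 2 − √3; its derivative equals [6(16−4a+a²)√(1−4a+a²) − 6(16−28a+7a²)] / [(−8−4a+a²)² √(1−4a+a²)] and is nonpositive there. -/

import Mathlib

/-- Real form of `w₊(a)`. -/
noncomputable def wPlusR (a : ℝ) : ℝ :=
  (4 - 10 * a + a ^ 2 + 2 * (a - 2) * Real.sqrt (1 - 4 * a + a ^ 2)) /
    (-8 - 4 * a + a ^ 2)

private lemma sqrt3_facts : Real.sqrt 3 ^ 2 = 3 ∧ (1.7 : ℝ) < Real.sqrt 3 ∧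
    Real.sqrt 3 < 1.8 := by
  have h : Real.sqrt 3 ^ 2 = 3 := Real.sq_sqrt (by norm_num)
  have hn : (0:ℝ) ≤ Real.sqrt 3 := Real.sqrt_nonneg 3
  refine ⟨h, ?_, ?_⟩ <;> nlinarith

private lemma wPlusR_hasDerivAt (a : ℝ) (ha : 0 < a) (ha2 : a < 2 - Real.sqrt 3) :
    HasDerivAt wPlusR
      ((6 * (16 - 4 * a + a ^ 2) * Real.sqrt (1 - 4 * a + a ^ 2) -
          6 * (16 - 28 * a + 7 * a ^ 2)) /
        ((-8 - 4 * a + a ^ 2) ^ 2 * Real.sqrt (1 - 4 * a + a ^ 2))) a := by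
  obtain ⟨h3, h17, h18⟩ := sqrt3_facts
  have ha3 : a < 0.3 := by linarith
  have hQ : 0 < 1 - 4 * a + a ^ 2 := by nlinarith
  have hs2 : Real.sqrt (1 - 4 * a + a ^ 2) ^ 2 = 1 - 4 * a + a ^ 2 :=
    Real.sq_sqrt hQ.le
  have hspos : 0 < Real.sqrt (1 - 4 * a + a ^ 2) := Real.sqrt_pos.mpr hQ
  have hDne : (-8 - 4 * a + a ^ 2) ≠ 0 := by nlinarith
  -- derivative of the inner polynomial
  have hQd : HasDerivAt (fun x : ℝ => 1 - 4 * x + x ^ 2) (2 * a - 4) a := by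
    have h1 : HasDerivAt (fun x : ℝ => 1 - 4 * x + x ^ 2)
        (0 - 4 * 1 + 2 * a ^ 1) a :=
      ((hasDerivAt_const a (1:ℝ)).sub ((hasDerivAt_id a).const_mul 4)).add
        (hasDerivAt_pow 2 a)
    convert h1 using 1; ring
  have hsd : HasDerivAt (fun x : ℝ => Real.sqrt (1 - 4 * x + x ^ 2))
      ((2 * a - 4) / (2 * Real.sqrt (1 - 4 * a + a ^ 2))) a :=
    hQd.sqrt hQ.ne'
  have hP : HasDerivAt (fun x : ℝ => 4 - 10 * x + x ^ 2) (2 * a - 10) a := by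
    have h1 : HasDerivAt (fun x : ℝ => 4 - 10 * x + x ^ 2)
        (0 - 10 * 1 + 2 * a ^ 1) a :=
      ((hasDerivAt_const a (4:ℝ)).sub ((hasDerivAt_id a).const_mul 10)).add
        (hasDerivAt_pow 2 a)
    convert h1 using 1; ring
  have hc : HasDerivAt (fun x : ℝ => 2 * (x - 2)) 2 a := by
    have h1 : HasDerivAt (fun x : ℝ => 2 * (x - 2)) (2 * (1 - 0)) a :=
      ((hasDerivAt_id a).sub (hasDerivAt_const a (2:ℝ))).const_mul 2
    convert h1 using 1; ring
  have hnum : HasDerivAt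
      (fun x : ℝ => 4 - 10 * x + x ^ 2 + 2 * (x - 2) * Real.sqrt (1 - 4 * x + x ^ 2))
      ((2 * a - 10) + (2 * Real.sqrt (1 - 4 * a + a ^ 2) +
        2 * (a - 2) * ((2 * a - 4) / (2 * Real.sqrt (1 - 4 * a + a ^ 2))))) a :=
    hP.add (hc.mul hsd)
  have hden : HasDerivAt (fun x : ℝ => -8 - 4 * x + x ^ 2) (2 * a - 4) a := by
    have h1 : HasDerivAt (fun x : ℝ => -8 - 4 * x + x ^ 2)
        (0 - 4 * 1 + 2 * a ^ 1) a :=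
      ((hasDerivAt_const a (-8:ℝ)).sub ((hasDerivAt_id a).const_mul 4)).add
        (hasDerivAt_pow 2 a)
    convert h1 using 1; ring
  have hw := hnum.div hden hDne
  unfold wPlusR
  convert hw using 1
  case e'_4 => rfl
  case e'_5 => rfl
  case e'_8 => rfl
  set s := Real.sqrt (1 - 4 * a + a ^ 2)
  rw [div_eq_div_iff (by positivity) (by positivity)]
  field_simp
  linear_combination (2 * (16 - 4 * a + a ^ 2)) * hs2

/-- `a ↦ w₊(a)` is monotonically decreasing on `(0, α]`, `α = 2-√3`; its derivative
equals `[6(16-4a+a²)√(1-4a+a²) - 6(16-28a+7a²)] / [(-8-4a+a²)²√(1-4a+a²)]` and is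
nonpositive there. -/
theorem wPlusR_antitone :
    AntitoneOn wPlusR (Set.Ioc 0 (2 - Real.sqrt 3)) ∧
    ∀ a : ℝ, 0 < a → a < 2 - Real.sqrt 3 →
      HasDerivAt wPlusR
        ((6 * (16 - 4 * a + a ^ 2) * Real.sqrt (1 - 4 * a + a ^ 2) -
            6 * (16 - 28 * a + 7 * a ^ 2)) /
          ((-8 - 4 * a + a ^ 2) ^ 2 * Real.sqrt (1 - 4 * a + a ^ 2))) a ∧
      (6 * (16 - 4 * a + a ^ 2) * Real.sqrt (1 - 4 * a + a ^ 2) -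
          6 * (16 - 28 * a + 7 * a ^ 2)) /
        ((-8 - 4 * a + a ^ 2) ^ 2 * Real.sqrt (1 - 4 * a + a ^ 2)) ≤ 0 := by
  obtain ⟨h3, h17, h18⟩ := sqrt3_facts
  -- nonpositivity of the derivative
  have hnonpos : ∀ a : ℝ, 0 < a → a < 2 - Real.sqrt 3 →
      (6 * (16 - 4 * a + a ^ 2) * Real.sqrt (1 - 4 * a + a ^ 2) -
          6 * (16 - 28 * a + 7 * a ^ 2)) /
        ((-8 - 4 * a + a ^ 2) ^ 2 * Real.sqrt (1 - 4 * a + a ^ 2)) ≤ 0 := by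
    intro a ha ha2
    have ha3 : a < 0.3 := by linarith
    have hQ : 0 < 1 - 4 * a + a ^ 2 := by nlinarith
    have hs2 : Real.sqrt (1 - 4 * a + a ^ 2) ^ 2 = 1 - 4 * a + a ^ 2 :=
      Real.sq_sqrt hQ.le
    have hspos : 0 < Real.sqrt (1 - 4 * a + a ^ 2) := Real.sqrt_pos.mpr hQ
    set s := Real.sqrt (1 - 4 * a + a ^ 2)
    have hA : 0 < 16 - 28 * a + 7 * a ^ 2 := by nlinarith
    have hB : 0 < 16 - 4 * a + a ^ 2 := by nlinarith
    have hkey : (16 - 28 * a + 7 * a ^ 2) ^ 2 - (16 - 4 * a + a ^ 2) ^ 2 * s ^ 2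
        = a * (4 - a) * (-8 - 4 * a + a ^ 2) ^ 2 := by rw [hs2]; ring
    have hkey' : 0 ≤ (16 - 28 * a + 7 * a ^ 2) ^ 2 - (16 - 4 * a + a ^ 2) ^ 2 * s ^ 2 := by
      rw [hkey]
      exact mul_nonneg (mul_nonneg ha.le (by linarith)) (sq_nonneg _)
    have hnum : 6 * (16 - 4 * a + a ^ 2) * s - 6 * (16 - 28 * a + 7 * a ^ 2) ≤ 0 := by
      nlinarith [mul_pos hB hspos, mul_nonneg hB.le hspos.le]
    exact div_nonpos_of_nonpos_of_nonneg hnum (by positivity)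
  refine ⟨?_, fun a ha ha2 => ⟨wPlusR_hasDerivAt a ha ha2, hnonpos a ha ha2⟩⟩
  -- antitone
  have halpha : (0:ℝ) < 2 - Real.sqrt 3 := by linarith
  apply antitoneOn_of_deriv_nonpos (convex_Ioc _ _)
  · -- continuity
    apply ContinuousOn.div
    · exact (Continuous.continuousOn (by continuity)).add
        ((Continuous.continuousOn (by continuity)).mul
          ((Real.continuous_sqrt.comp (by continuity)).continuousOn))
    · exact Continuous.continuousOn (by continuity)
    · intro x hx
      obtain ⟨hx1, hx2⟩ := hx
      have : x < 0.3 := by linarith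
      nlinarith
  · rw [interior_Ioc]
    intro x hx
    exact ((wPlusR_hasDerivAt x hx.1 hx.2).differentiableAt).differentiableWithinAt
  · rw [interior_Ioc]
    intro x hx
    rw [(wPlusR_hasDerivAt x hx.1 hx.2).deriv]
    exact hnonpos x hx.1 hx.2
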